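/- arXiv:1909.02379 — 6 statements merged into one kernel-verified Lean document; each statement's English description precedes it below -/
import Mathlib

section
/- Let (X, ‖·‖) be a Banach space and let T : X → X be a (k, a)-enriched Kannan mapping, i.e., there exist constants k ∈ [0, ∞) and a ∈ [0, 1/2) such that ‖k(x−y) + Tx − Ty‖ ≤ a·(‖x − Tx‖ + ‖y − Ty‖) for all x, y ∈ X. Then T has exactly one fixed point, i.e., Fix(T) = {p} for some p ∈ X. -/
/-!
Writing `T_λ x = (1 - λ) x + λ T x` with `λ = 1 / (k + 1)`, one has
`T_λ x - T_λ y = λ (k (x - y) + T x - T y)` and `x - T_λ x = λ (x - T x)`, so the enriched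
Kannan condition for `T` is exactly the Kannan condition for `T_λ`, and `T_λ` has the same fixed
points as `T`. Kannan's theorem then applies to `S = T_λ`: the condition gives
`d(S x, S² x) ≤ a / (1 - a) · d(x, S x)` with `a / (1 - a) < 1` when `a < 1/2`, so the orbits
are Cauchy, and passing to the limit in the condition shows that the limit is fixed.
-/

open Filter Function Topology

def KannanWith {α : Type*} [PseudoMetricSpace α] (a : ℝ) (S : α → α) : Prop :=
  ∀ x y, dist (S x) (S y) ≤ a * (dist x (S x) + dist y (S y))

namespace KannanWith

variable {α : Type*} [MetricSpace α] {a : ℝ} {S : α → α}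

theorem dist_apply_apply_le (hS : KannanWith a S) (ha : a < 1) (x : α) :
    dist (S x) (S (S x)) ≤ a / (1 - a) * dist x (S x) := by
  have h1a : 0 < 1 - a := by linarith
  rw [div_mul_eq_mul_div, le_div_iff₀ h1a]
  linarith [hS x (S x)]

theorem dist_iterate_succ_le (hS : KannanWith a S) (ha0 : 0 ≤ a) (ha : a < 1) (x : α)
    (n : ℕ) : dist (S^[n] x) (S^[n + 1] x) ≤ dist x (S x) * (a / (1 - a)) ^ n := by
  induction n with
  | zero => simp
  | succ n ih =>
    have hc : 0 ≤ a / (1 - a) := div_nonneg ha0 (by linarith)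
    rw [iterate_succ_apply' S (n + 1), iterate_succ_apply']
    calc dist (S (S^[n] x)) (S (S (S^[n] x)))
        ≤ a / (1 - a) * dist (S^[n] x) (S (S^[n] x)) := hS.dist_apply_apply_le ha _
      _ ≤ a / (1 - a) * (dist x (S x) * (a / (1 - a)) ^ n) := by
        rw [← iterate_succ_apply' S n]
        exact mul_le_mul_of_nonneg_left ih hc
      _ = dist x (S x) * (a / (1 - a)) ^ (n + 1) := by ring

theorem cauchySeq_iterate (hS : KannanWith a S) (ha0 : 0 ≤ a) (ha : a < 1 / 2) (x : α) :
    CauchySeq fun n => S^[n] x :=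
  cauchySeq_of_le_geometric _ _ (by rw [div_lt_one (by linarith)]; linarith)
    (hS.dist_iterate_succ_le ha0 (by linarith) x)

theorem isFixedPt_of_tendsto_iterate (hS : KannanWith a S) (ha : a < 1) {x p : α}
    (hp : Tendsto (fun n => S^[n] x) atTop (𝓝 p)) : IsFixedPt S p := by
  have hp1 : Tendsto (fun n => S^[n + 1] x) atTop (𝓝 p) := hp.comp (tendsto_add_atTop_nat 1)
  have hle : dist p (S p) ≤ a * (dist p p + dist p (S p)) :=
    le_of_tendsto_of_tendsto' (hp1.dist tendsto_const_nhds)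
      (((hp.dist hp1).add tendsto_const_nhds).const_mul a)
      fun n => by simpa only [iterate_succ_apply'] using hS (S^[n] x) p
  rw [dist_self, zero_add] at hle
  have hdist : dist p (S p) = 0 := by nlinarith [dist_nonneg (x := p) (y := S p)]
  exact (dist_eq_zero.mp hdist).symm

theorem eq_of_isFixedPt (hS : KannanWith a S) {p q : α} (hp : IsFixedPt S p)
    (hq : IsFixedPt S q) : p = q := by
  have h := hS p q
  rw [hp.eq, hq.eq, dist_self, dist_self, add_zero, mul_zero] at h
  exact dist_le_zero.mp h

theorem existsUnique_isFixedPt [Nonempty α] [CompleteSpace α] (hS : KannanWith a S)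
    (ha0 : 0 ≤ a) (ha : a < 1 / 2) : ∃! p, IsFixedPt S p := by
  obtain ⟨p, hp⟩ :=
    cauchySeq_tendsto_of_complete (hS.cauchySeq_iterate ha0 ha (Classical.arbitrary α))
  exact ⟨p, hS.isFixedPt_of_tendsto_iterate (by linarith) hp,
    fun q hq => hS.eq_of_isFixedPt hq (hS.isFixedPt_of_tendsto_iterate (by linarith) hp)⟩

end KannanWith

section Averaged

variable {R E : Type*}

def averagedMap [Ring R] [AddCommGroup E] [Module R E] (l : R) (T : E → E) (x : E) : E :=
  (1 - l) • x + l • T x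

theorem sub_averagedMap [Ring R] [AddCommGroup E] [Module R E] (l : R) (T : E → E) (x : E) :
    x - averagedMap l T x = l • (x - T x) := by
  simp only [averagedMap, sub_smul, one_smul, smul_sub]
  abel

theorem averagedMap_sub_averagedMap [CommRing R] [AddCommGroup E] [Module R E] {l k : R}
    (hl : 1 - l = l * k) (T : E → E) (x y : E) :
    averagedMap l T x - averagedMap l T y = l • (k • (x - y) + (T x - T y)) := by
  simp only [averagedMap, hl, smul_add, smul_sub, mul_smul]
  abel

theorem isFixedPt_averagedMap_iff [Ring R] [IsDomain R] [AddCommGroup E] [Module R E]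
    [Module.IsTorsionFree R E] {l : R} (hl : l ≠ 0) {T : E → E} {x : E} :
    IsFixedPt (averagedMap l T) x ↔ IsFixedPt T x := by
  rw [IsFixedPt, IsFixedPt, eq_comm, ← sub_eq_zero, sub_averagedMap,
    smul_eq_zero_iff_right hl, sub_eq_zero, eq_comm]

theorem kannanWith_averagedMap [NormedAddCommGroup E] [NormedSpace ℝ E] {l k a : ℝ}
    (hl : 1 - l = l * k) {T : E → E}
    (hT : ∀ x y : E, ‖k • (x - y) + (T x - T y)‖ ≤ a * (‖x - T x‖ + ‖y - T y‖)) :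
    KannanWith a (averagedMap l T) := by
  intro x y
  rw [dist_eq_norm, dist_eq_norm, dist_eq_norm, averagedMap_sub_averagedMap hl,
    sub_averagedMap, sub_averagedMap, norm_smul, norm_smul, norm_smul]
  calc ‖l‖ * ‖k • (x - y) + (T x - T y)‖ ≤ ‖l‖ * (a * (‖x - T x‖ + ‖y - T y‖)) :=
        mul_le_mul_of_nonneg_left (hT x y) (norm_nonneg l)
    _ = a * (‖l‖ * ‖x - T x‖ + ‖l‖ * ‖y - T y‖) := by ring

end Averaged

/-- Any `(k, a)`-enriched Kannan mapping on a Banach space has exactly one fixed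
point, i.e. `Fix(T) = {p}` for some `p`. -/
theorem enrichedKannan_fixedPointSet_singleton
    {X : Type*} [NormedAddCommGroup X] [NormedSpace ℝ X] [CompleteSpace X]
    (T : X → X) (k a : ℝ) (hk : 0 ≤ k) (ha0 : 0 ≤ a) (ha : a < 1 / 2)
    (hT : ∀ x y : X, ‖k • (x - y) + (T x - T y)‖ ≤ a * (‖x - T x‖ + ‖y - T y‖)) :
    ∃ p : X, {x : X | T x = x} = {p} := by
  have hk1 : k + 1 ≠ 0 := by positivity
  have hl : 1 - (k + 1)⁻¹ = (k + 1)⁻¹ * k := by field_simp; ring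
  obtain ⟨p, hp, huniq⟩ :=
    (kannanWith_averagedMap hl hT).existsUnique_isFixedPt ha0 ha
  have hfix (x : X) := isFixedPt_averagedMap_iff (T := T) (x := x) (inv_ne_zero hk1)
  refine ⟨p, Set.ext fun x => ⟨fun hx => huniq x ((hfix x).mpr hx), ?_⟩⟩
  rintro rfl
  exact (hfix x).mp hp
end

section
/- Let (X, ‖·‖) be a Banach space, let T : X → X be a (k, a)-enriched Kannan mapping with k ∈ [0, ∞) and a ∈ [0, 1/2), let λ = 1/(k+1), let p be the unique fixed point of T, and let (xₙ) be the Krasnoselskij iteration xₙ₊₁ = (1−λ)xₙ + λT xₙ with arbitrary x₀ ∈ X. Then, with δ = a/(1−a), the a priori error estimate ‖xₙ − p‖ ≤ (δⁿ/(1−δ))·‖x₁ − x₀‖ holds for all n ≥ 1. -/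
/-!
The averaged map `S = (1 - λ) • id + λ • T` with `λ = 1/(k+1)` satisfies
`S x - S y = λ • (k • (x - y) + (T x - T y))` and `x - S x = λ • (x - T x)`, so the enriched
condition for `T` is exactly the Kannan condition for `S`, and the Krasnoselskij iteration of `T` is
the Picard iteration of `S`. For a Kannan map the Picard steps shrink by the factor
`δ = a/(1-a)`, and at a fixed point `p` the Kannan condition gives `‖S y - p‖ ≤ a ‖y - S y‖`;
finally `a ≤ δ/(1-δ)`.
-/

theorem le_div_one_sub_div_one_sub {a : ℝ} (ha0 : 0 ≤ a) (ha : a < 1 / 2) :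
    a ≤ a / (1 - a) / (1 - a / (1 - a)) := by
  have h1a : 1 - a ≠ 0 := by linarith
  have h1 : (1 - a / (1 - a)) = (1 - 2 * a) / (1 - a) := by field_simp; ring
  rw [h1, div_div_div_cancel_right₀ (by linarith), le_div_iff₀ (by linarith)]
  nlinarith

section

variable {X : Type*}

def IsKannanWith [SeminormedAddCommGroup X] (a : ℝ) (S : X → X) : Prop :=
  ∀ x y : X, ‖S x - S y‖ ≤ a * (‖x - S x‖ + ‖y - S y‖)

section Kannan

variable [SeminormedAddCommGroup X] {a : ℝ} {S : X → X}

theorem IsKannanWith.norm_sub_fixedPoint_le (hS : IsKannanWith a S) {p : X} (hp : S p = p)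
    (y : X) : ‖S y - p‖ ≤ a * ‖y - S y‖ := by
  simpa [hp] using hS y p

theorem IsKannanWith.norm_iterate_step_le (hS : IsKannanWith a S) (ha : a < 1) {x : ℕ → X}
    (hx : ∀ n, x (n + 1) = S (x n)) (n : ℕ) :
    ‖x (n + 2) - x (n + 1)‖ ≤ a / (1 - a) * ‖x (n + 1) - x n‖ := by
  have h := hS (x n) (x (n + 1))
  rw [← hx n, ← hx (n + 1), norm_sub_rev (x (n + 1)) (x (n + 2)),
    norm_sub_rev (x n) (x (n + 1))] at h
  rw [div_mul_eq_mul_div, le_div_iff₀ (by linarith)]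
  linarith

theorem IsKannanWith.norm_iterate_step_le_pow (hS : IsKannanWith a S) (ha0 : 0 ≤ a) (ha : a < 1)
    {x : ℕ → X} (hx : ∀ n, x (n + 1) = S (x n)) (n : ℕ) :
    ‖x (n + 1) - x n‖ ≤ (a / (1 - a)) ^ n * ‖x 1 - x 0‖ :=
  le_geom (u := fun n ↦ ‖x (n + 1) - x n‖) (div_nonneg ha0 (by linarith)) n
    fun m _ ↦ hS.norm_iterate_step_le ha hx m

end Kannan

theorem isKannanWith_averaged_of_enriched [SeminormedAddCommGroup X] [NormedSpace ℝ X]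
    {T : X → X} {k a : ℝ} (hk : k + 1 ≠ 0)
    (hT : ∀ x y : X, ‖k • (x - y) + (T x - T y)‖ ≤ a * (‖x - T x‖ + ‖y - T y‖)) :
    IsKannanWith a fun x ↦ (1 - 1 / (k + 1)) • x + (1 / (k + 1)) • T x := by
  intro u v
  set l : ℝ := 1 / (k + 1)
  have hl : 1 - l = l * k := by simp only [l]; field_simp; ring
  have hSuv : ((1 - l) • u + l • T u) - ((1 - l) • v + l • T v) =
      l • (k • (u - v) + (T u - T v)) := by rw [hl]; module
  have hdisp : ∀ w : X, w - ((1 - l) • w + l • T w) = l • (w - T w) := fun w ↦ by module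
  rw [hSuv, hdisp, hdisp, norm_smul, norm_smul, norm_smul]
  calc ‖l‖ * ‖k • (u - v) + (T u - T v)‖ ≤ ‖l‖ * (a * (‖u - T u‖ + ‖v - T v‖)) :=
        mul_le_mul_of_nonneg_left (hT u v) (norm_nonneg l)
    _ = a * (‖l‖ * ‖u - T u‖ + ‖l‖ * ‖v - T v‖) := by ring

end

theorem enrichedKannan_krasnoselskij_apriori_estimate_general
    {X : Type*} [NormedAddCommGroup X] [NormedSpace ℝ X]
    (T : X → X) (k a : ℝ) (hk : 0 ≤ k) (ha0 : 0 ≤ a) (ha : a < 1 / 2)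
    (hT : ∀ x y : X, ‖k • (x - y) + (T x - T y)‖ ≤ a * (‖x - T x‖ + ‖y - T y‖))
    (p : X) (hp : T p = p)
    (x : ℕ → X)
    (hx : ∀ n : ℕ, x (n + 1) = (1 - 1 / (k + 1)) • x n + (1 / (k + 1)) • T (x n)) :
    ∀ n : ℕ, 1 ≤ n →
      ‖x n - p‖ ≤ (a / (1 - a)) ^ n / (1 - a / (1 - a)) * ‖x 1 - x 0‖ := by
  intro n hn
  obtain ⟨m, rfl⟩ : ∃ m, n = m + 1 := ⟨n - 1, by omega⟩
  have hS := isKannanWith_averaged_of_enriched (by linarith) hT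
  have hSp : (1 - 1 / (k + 1)) • p + (1 / (k + 1)) • T p = p := by rw [hp]; module
  have hδ : 0 ≤ a / (1 - a) := div_nonneg ha0 (by linarith)
  calc ‖x (m + 1) - p‖ ≤ a * ‖x m - x (m + 1)‖ := by
        simpa only [hx m] using hS.norm_sub_fixedPoint_le hSp (x m)
    _ ≤ a * ((a / (1 - a)) ^ m * ‖x 1 - x 0‖) := by
        rw [norm_sub_rev]
        exact mul_le_mul_of_nonneg_left (hS.norm_iterate_step_le_pow ha0 (by linarith) hx m) ha0
    _ ≤ a / (1 - a) / (1 - a / (1 - a)) * ((a / (1 - a)) ^ m * ‖x 1 - x 0‖) :=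
        mul_le_mul_of_nonneg_right (le_div_one_sub_div_one_sub ha0 ha) (by positivity)
    _ = (a / (1 - a)) ^ (m + 1) / (1 - a / (1 - a)) * ‖x 1 - x 0‖ := by ring

/-- A priori error estimate for the Krasnoselskij iteration associated to a
`(k, a)`-enriched Kannan mapping: with `δ = a/(1−a)`,
`‖xₙ − p‖ ≤ (δⁿ/(1−δ))·‖x₁ − x₀‖` for all `n ≥ 1`. -/
theorem enrichedKannan_krasnoselskij_apriori_estimate
    {X : Type*} [NormedAddCommGroup X] [NormedSpace ℝ X] [CompleteSpace X]
    (T : X → X) (k a : ℝ) (hk : 0 ≤ k) (ha0 : 0 ≤ a) (ha : a < 1 / 2)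
    (hT : ∀ x y : X, ‖k • (x - y) + (T x - T y)‖ ≤ a * (‖x - T x‖ + ‖y - T y‖))
    (p : X) (hp : T p = p) (hpu : ∀ q : X, T q = q → q = p)
    (x : ℕ → X)
    (hx : ∀ n : ℕ, x (n + 1) = (1 - 1 / (k + 1)) • x n + (1 / (k + 1)) • T (x n)) :
    ∀ n : ℕ, 1 ≤ n →
      ‖x n - p‖ ≤ (a / (1 - a)) ^ n / (1 - a / (1 - a)) * ‖x 1 - x 0‖ :=
  enrichedKannan_krasnoselskij_apriori_estimate_general T k a hk ha0 ha hT p hp x hx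
end

section
/- Let (X, ‖·‖) be a Banach space, let T : X → X be a (k, a)-enriched Kannan mapping with k ∈ [0, ∞) and a ∈ [0, 1/2), let λ = 1/(k+1), let p be the unique fixed point of T, and let (xₙ) be the Krasnoselskij iteration xₙ₊₁ = (1−λ)xₙ + λT xₙ with arbitrary x₀ ∈ X. Then, with δ = a/(1−a), the a posteriori error estimate ‖xₙ − p‖ ≤ (δ/(1−δ))·‖xₙ − xₙ₋₁‖ holds for all n ≥ 1. -/
/-!
With `λ = 1/(k+1)` the Krasnoselskij step `x ↦ (1-λ)x + λTx` satisfies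
`xₙ₊₁ - p = λ (k(xₙ - p) + (Txₙ - Tp))` and `xₙ₊₁ - xₙ = λ (Txₙ - xₙ)`, so the enriched Kannan
condition applied to the pair `(xₙ, p)` gives `‖xₙ₊₁ - p‖ ≤ a ‖xₙ₊₁ - xₙ‖`. The claimed constant
`δ/(1-δ)` dominates `a` as soon as `a < 1/2`.
-/

section Krasnoselskij

variable {X : Type*} [NormedAddCommGroup X] [NormedSpace ℝ X]

def IsEnrichedKannan (T : X → X) (k a : ℝ) : Prop :=
  ∀ x y : X, ‖k • (x - y) + (T x - T y)‖ ≤ a * (‖x - T x‖ + ‖y - T y‖)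

noncomputable def krasnoselskijStep (T : X → X) (k : ℝ) (x : X) : X :=
  (1 - 1 / (k + 1)) • x + (1 / (k + 1)) • T x

theorem krasnoselskijStep_sub_self (T : X → X) (k : ℝ) (x : X) :
    krasnoselskijStep T k x - x = (1 / (k + 1)) • (T x - x) := by
  unfold krasnoselskijStep
  module

theorem krasnoselskijStep_sub (T : X → X) {k : ℝ} (hk : k + 1 ≠ 0) (x p : X) :
    krasnoselskijStep T k x - p = (1 / (k + 1)) • (k • (x - p) + (T x - p)) := by
  rw [krasnoselskijStep]
  match_scalars <;> field_simp <;> ring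

theorem IsEnrichedKannan.norm_krasnoselskijStep_sub_fixedPoint_le {T : X → X} {k a : ℝ}
    (hT : IsEnrichedKannan T k a) (hk : k + 1 ≠ 0) {p : X} (hp : T p = p) (x : X) :
    ‖krasnoselskijStep T k x - p‖ ≤ a * ‖krasnoselskijStep T k x - x‖ := by
  have hKannan := hT x p
  rw [hp, sub_self, norm_zero, add_zero] at hKannan
  rw [krasnoselskijStep_sub T hk, krasnoselskijStep_sub_self, norm_smul, norm_smul,
    norm_sub_rev (T x), mul_left_comm]
  exact mul_le_mul_of_nonneg_left hKannan (norm_nonneg _)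

end Krasnoselskij

theorem enrichedKannan_krasnoselskij_aposteriori_estimate_general
    {X : Type*} [NormedAddCommGroup X] [NormedSpace ℝ X]
    (T : X → X) (k a : ℝ) (hk : 0 ≤ k) (ha0 : 0 ≤ a) (ha : a < 1 / 2)
    (hT : ∀ x y : X, ‖k • (x - y) + (T x - T y)‖ ≤ a * (‖x - T x‖ + ‖y - T y‖))
    (p : X) (hp : T p = p)
    (x : ℕ → X)
    (hx : ∀ n : ℕ, x (n + 1) = (1 - 1 / (k + 1)) • x n + (1 / (k + 1)) • T (x n)) :
    ∀ n : ℕ, 1 ≤ n →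
      ‖x n - p‖ ≤ (a / (1 - a)) / (1 - a / (1 - a)) * ‖x n - x (n - 1)‖ := by
  intro n hn
  obtain ⟨m, rfl⟩ : ∃ m, n = m + 1 := ⟨n - 1, by omega⟩
  have hstep : x (m + 1) = krasnoselskijStep T k (x m) := hx m
  rw [Nat.add_sub_cancel, hstep]
  calc ‖krasnoselskijStep T k (x m) - p‖
      ≤ a * ‖krasnoselskijStep T k (x m) - x m‖ :=
        IsEnrichedKannan.norm_krasnoselskijStep_sub_fixedPoint_le hT (by linarith) hp (x m)
    _ ≤ _ := mul_le_mul_of_nonneg_right (le_div_one_sub_div_one_sub ha0 ha) (norm_nonneg _)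

/-- A posteriori error estimate for the Krasnoselskij iteration associated to a
`(k, a)`-enriched Kannan mapping: with `δ = a/(1−a)`,
`‖xₙ − p‖ ≤ (δ/(1−δ))·‖xₙ − xₙ₋₁‖` for all `n ≥ 1`. -/
theorem enrichedKannan_krasnoselskij_aposteriori_estimate
    {X : Type*} [NormedAddCommGroup X] [NormedSpace ℝ X] [CompleteSpace X]
    (T : X → X) (k a : ℝ) (hk : 0 ≤ k) (ha0 : 0 ≤ a) (ha : a < 1 / 2)
    (hT : ∀ x y : X, ‖k • (x - y) + (T x - T y)‖ ≤ a * (‖x - T x‖ + ‖y - T y‖))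
    (p : X) (hp : T p = p) (hpu : ∀ q : X, T q = q → q = p)
    (x : ℕ → X)
    (hx : ∀ n : ℕ, x (n + 1) = (1 - 1 / (k + 1)) • x n + (1 / (k + 1)) • T (x n)) :
    ∀ n : ℕ, 1 ≤ n →
      ‖x n - p‖ ≤ (a / (1 - a)) / (1 - a / (1 - a)) * ‖x n - x (n - 1)‖ :=
  enrichedKannan_krasnoselskij_aposteriori_estimate_general T k a hk ha0 ha hT p hp x hx
end

section
/- Let (X, ‖·‖) be a Banach space and let T : X → X be a (k, h)-enriched Bianchini mapping, i.e., there exist constants k ∈ [0, ∞) and h ∈ [0, 1) such that ‖k(x−y) + Tx − Ty‖ ≤ h·max{‖x − Tx‖, ‖y − Ty‖} for all x, y ∈ X. Then T has exactly one fixed point, i.e., Fix(T) = {p} for some p ∈ X. -/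
/-!
With `λ = 1 / (k + 1)`, the averaged map `S x = (1 - λ) x + λ T x` has the same fixed points
as `T`, and `S x - S y = λ (k (x - y) + T x - T y)`, `x - S x = λ (x - T x)`, so the enriched
condition on `T` is exactly Bianchini's condition `d(S x, S y) ≤ h max {d(x, S x), d(y, S y)}`
for `S`. For a Bianchini map the steps of the Picard iteration shrink geometrically,
`d(S x, S² x) ≤ h d(x, S x)`, so the iterates converge; passing to the limit in the Bianchini
inequality shows that the limit is fixed, and two fixed points `p, q` satisfy `d(p, q) ≤ h · 0`.
-/

open Function Filter Topology AffineMap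

def BianchiniWith {α : Type*} [PseudoMetricSpace α] (h : ℝ) (S : α → α) : Prop :=
  ∀ x y, dist (S x) (S y) ≤ h * max (dist x (S x)) (dist y (S y))

namespace BianchiniWith

variable {α : Type*} [MetricSpace α] {h : ℝ} {S : α → α}

theorem dist_map_map_self_le (hS : BianchiniWith h S) (hh : h < 1) (x : α) :
    dist (S x) (S (S x)) ≤ h * dist x (S x) := by
  have hx : 0 ≤ h * dist x (S x) := by simpa using hS x x
  rcases le_total (dist (S x) (S (S x))) (dist x (S x)) with hle | hle
  · simpa [max_eq_left hle] using hS x (S x)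
  · have hstep := hS x (S x)
    rw [max_eq_right hle] at hstep
    nlinarith [dist_nonneg (x := S x) (y := S (S x))]

theorem dist_iterate_succ_le (hS : BianchiniWith h S) (hh0 : 0 ≤ h) (hh : h < 1) (x : α)
    (n : ℕ) : dist (S^[n] x) (S^[n + 1] x) ≤ dist x (S x) * h ^ n := by
  induction n with
  | zero => simp
  | succ n ih =>
    simp only [iterate_succ_apply'] at ih ⊢
    calc dist (S (S^[n] x)) (S (S (S^[n] x))) ≤ h * dist (S^[n] x) (S (S^[n] x)) :=
          hS.dist_map_map_self_le hh _
      _ ≤ h * (dist x (S x) * h ^ n) := by gcongr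
      _ = dist x (S x) * h ^ (n + 1) := by ring

theorem cauchySeq_iterate (hS : BianchiniWith h S) (hh0 : 0 ≤ h) (hh : h < 1) (x : α) :
    CauchySeq fun n ↦ S^[n] x :=
  cauchySeq_of_le_geometric h (dist x (S x)) hh (hS.dist_iterate_succ_le hh0 hh x)

theorem isFixedPt_of_tendsto_iterate (hS : BianchiniWith h S) (hh : h < 1) {x p : α}
    (hp : Tendsto (fun n ↦ S^[n] x) atTop (𝓝 p)) : IsFixedPt S p := by
  have hp' : Tendsto (fun n ↦ S (S^[n] x)) atTop (𝓝 p) :=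
    (hp.comp (tendsto_add_atTop_nat 1)).congr fun n ↦ iterate_succ_apply' S n x
  have hstep : Tendsto (fun n ↦ dist (S^[n] x) (S (S^[n] x))) atTop (𝓝 0) := by
    simpa using hp.dist hp'
  have hle : dist p (S p) ≤ h * max 0 (dist p (S p)) :=
    le_of_tendsto_of_tendsto' (hp'.dist tendsto_const_nhds)
      (tendsto_const_nhds.mul (hstep.max tendsto_const_nhds)) fun n ↦ hS _ _
  rw [max_eq_right dist_nonneg] at hle
  exact (dist_le_zero.mp (by nlinarith [dist_nonneg (x := p) (y := S p)])).symm

theorem eq_of_isFixedPt (hS : BianchiniWith h S) {p q : α} (hp : IsFixedPt S p)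
    (hq : IsFixedPt S q) : p = q :=
  dist_le_zero.mp <| by simpa [hp.eq, hq.eq] using hS p q

theorem exists_fixedPoints_eq_singleton [CompleteSpace α] [Nonempty α] (hS : BianchiniWith h S)
    (hh0 : 0 ≤ h) (hh : h < 1) : ∃ p, fixedPoints S = {p} := by
  obtain ⟨p, hp⟩ :=
    cauchySeq_tendsto_of_complete (hS.cauchySeq_iterate hh0 hh (Classical.arbitrary α))
  have hfix := hS.isFixedPt_of_tendsto_iterate hh hp
  exact ⟨p, Set.eq_singleton_iff_unique_mem.mpr ⟨hfix, fun q hq ↦ hS.eq_of_isFixedPt hq hfix⟩⟩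

end BianchiniWith

theorem fixedPoints_lineMap_self {𝕜 V P : Type*} [Ring 𝕜] [IsDomain 𝕜] [AddCommGroup V]
    [Module 𝕜 V] [Module.IsTorsionFree 𝕜 V] [AddTorsor V P] {c : 𝕜} (hc : c ≠ 0) (T : P → P) :
    fixedPoints (fun x ↦ lineMap x (T x) c) = fixedPoints T := by
  ext x
  simp only [mem_fixedPoints, IsFixedPt, lineMap_eq_left_iff, hc, or_false]
  exact eq_comm

def EnrichedBianchiniWith {X : Type*} [NormedAddCommGroup X] [NormedSpace ℝ X] (k h : ℝ)
    (T : X → X) : Prop :=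
  ∀ x y, ‖k • (x - y) + (T x - T y)‖ ≤ h * max ‖x - T x‖ ‖y - T y‖

theorem EnrichedBianchiniWith.bianchiniWith_lineMap {X : Type*} [NormedAddCommGroup X]
    [NormedSpace ℝ X] {k h : ℝ} {T : X → X} (hT : EnrichedBianchiniWith k h T) (hk : 0 ≤ k) :
    BianchiniWith h fun x ↦ lineMap x (T x) (k + 1)⁻¹ := by
  intro x y
  set c := (k + 1)⁻¹
  have hc : 0 < c := by positivity
  have hck : c * k = 1 - c := by simp only [c]; field_simp; ring
  have hsub : lineMap x (T x) c - lineMap y (T y) c = c • (k • (x - y) + (T x - T y)) := by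
    simp only [lineMap_apply_module]
    match_scalars <;> linarith
  rw [dist_eq_norm, hsub, dist_left_lineMap, dist_left_lineMap, dist_eq_norm, dist_eq_norm,
    norm_smul, Real.norm_of_nonneg hc.le, ← mul_max_of_nonneg _ _ hc.le, mul_left_comm]
  exact mul_le_mul_of_nonneg_left (hT x y) hc.le

/-- Any `(k, h)`-enriched Bianchini mapping on a Banach space has exactly one
fixed point, i.e. `Fix(T) = {p}` for some `p`. -/
theorem enrichedBianchini_fixedPointSet_singleton
    {X : Type*} [NormedAddCommGroup X] [NormedSpace ℝ X] [CompleteSpace X]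
    (T : X → X) (k h : ℝ) (hk : 0 ≤ k) (hh0 : 0 ≤ h) (hh : h < 1)
    (hT : ∀ x y : X, ‖k • (x - y) + (T x - T y)‖ ≤ h * max ‖x - T x‖ ‖y - T y‖) :
    ∃ p : X, {x : X | T x = x} = {p} := by
  obtain ⟨p, hp⟩ :=
    (EnrichedBianchiniWith.bianchiniWith_lineMap hT hk).exists_fixedPoints_eq_singleton hh0 hh
  rw [fixedPoints_lineMap_self (by positivity) T] at hp
  exact ⟨p, hp⟩
end

section
/- Let (X, ‖·‖) be a Banach space, let T : X → X be a (k, h)-enriched Bianchini mapping with k ∈ [0, ∞) and h ∈ (0, 1), let λ = 1/(k+1), let p be the unique fixed point of T, and let (xₙ) be the Krasnoselskij iteration xₙ₊₁ = (1−λ)xₙ + λT xₙ with arbitrary x₀ ∈ X. Then the error estimates ‖xₙ − p‖ ≤ (hⁿ/(1−h))·‖x₁ − x₀‖ and ‖xₙ − p‖ ≤ (h/(1−h))·‖xₙ − xₙ₋₁‖ hold for all n ≥ 1. -/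
/-!
With `λ = 1/(k+1)` one has `1 - λ = λk`, so the Krasnoselskij map `S = (1-λ)·id + λT` satisfies
`Sx - Sy = λ(k(x-y) + Tx - Ty)` and `x - Sx = λ(x - Tx)`: `S` is an ordinary Bianchini mapping
with the same constant `h`, and its orbits are the Krasnoselskij iterates of `T`. For a Bianchini
mapping, successive differences along an orbit shrink by the factor `h` and the distance of `Sx`
to a fixed point is at most `h‖x - Sx‖`; both estimates follow.
-/

open Function

section Bianchini

variable {X : Type*} [NormedAddCommGroup X]

def IsBianchini (h : ℝ) (S : X → X) : Prop :=
  ∀ a b : X, ‖S a - S b‖ ≤ h * max ‖a - S a‖ ‖b - S b‖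

variable {h : ℝ} {S : X → X}

theorem IsBianchini.norm_sub_fixedPt_le (hS : IsBianchini h S) {p : X} (hp : IsFixedPt S p)
    (a : X) : ‖S a - p‖ ≤ h * ‖a - S a‖ := by
  simpa [hp.eq] using hS a p

theorem IsBianchini.norm_map_map_sub_le (hS : IsBianchini h S) (h0 : 0 ≤ h) (h1 : h < 1)
    (a : X) : ‖S (S a) - S a‖ ≤ h * ‖S a - a‖ := by
  have hmax := hS (S a) a
  rw [norm_sub_rev a] at hmax
  rcases max_cases ‖S a - S (S a)‖ ‖S a - a‖ with ⟨hm, -⟩ | ⟨hm, -⟩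
  · -- the first alternative forces `S (S a) = S a`, since `h < 1`
    rw [hm, norm_sub_rev (S a)] at hmax
    have hzero : ‖S (S a) - S a‖ ≤ 0 := by nlinarith [norm_nonneg (S (S a) - S a)]
    exact hzero.trans (by positivity)
  · rwa [hm] at hmax

theorem IsBianchini.norm_orbit_succ_sub_le (hS : IsBianchini h S) (h0 : 0 ≤ h) (h1 : h < 1)
    {x : ℕ → X} (hx : ∀ n, x (n + 1) = S (x n)) (n : ℕ) :
    ‖x (n + 1) - x n‖ ≤ h ^ n * ‖x 1 - x 0‖ := by
  induction n with
  | zero => simp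
  | succ n ih =>
    calc ‖x (n + 1 + 1) - x (n + 1)‖ ≤ h * ‖x (n + 1) - x n‖ := by
          simpa only [hx] using hS.norm_map_map_sub_le h0 h1 (x n)
      _ ≤ h * (h ^ n * ‖x 1 - x 0‖) := mul_le_mul_of_nonneg_left ih h0
      _ = h ^ (n + 1) * ‖x 1 - x 0‖ := by ring

theorem IsBianchini.norm_orbit_sub_fixedPt_le (hS : IsBianchini h S) {p : X}
    (hp : IsFixedPt S p) {x : ℕ → X} (hx : ∀ n, x (n + 1) = S (x n)) (n : ℕ) :
    ‖x (n + 1) - p‖ ≤ h * ‖x (n + 1) - x n‖ := by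
  simpa only [hx, norm_sub_rev (x n)] using hS.norm_sub_fixedPt_le hp (x n)

end Bianchini

section Krasnoselskij

variable {X : Type*} [NormedAddCommGroup X] [NormedSpace ℝ X]

def IsEnrichedBianchini (k h : ℝ) (T : X → X) : Prop :=
  ∀ a b : X, ‖k • (a - b) + (T a - T b)‖ ≤ h * max ‖a - T a‖ ‖b - T b‖

def krasnoselskijMap (l : ℝ) (T : X → X) (a : X) : X :=
  (1 - l) • a + l • T a

variable {T : X → X}

theorem sub_krasnoselskijMap (l : ℝ) (a : X) :
    a - krasnoselskijMap l T a = l • (a - T a) := by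
  unfold krasnoselskijMap
  module

theorem krasnoselskijMap_sub_krasnoselskijMap {k : ℝ} (hk : k + 1 ≠ 0) (a b : X) :
    krasnoselskijMap (1 / (k + 1)) T a - krasnoselskijMap (1 / (k + 1)) T b =
      (1 / (k + 1)) • (k • (a - b) + (T a - T b)) := by
  have hl : 1 - 1 / (k + 1) = 1 / (k + 1) * k := by field_simp; ring
  simp only [krasnoselskijMap, hl]
  module

theorem Function.IsFixedPt.krasnoselskijMap {p : X} (hp : IsFixedPt T p) (l : ℝ) :
    IsFixedPt (krasnoselskijMap l T) p := by
  simp only [IsFixedPt, _root_.krasnoselskijMap, hp.eq]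
  module

theorem IsEnrichedBianchini.isBianchini_krasnoselskijMap {k h : ℝ}
    (hT : IsEnrichedBianchini k h T) (hk : 0 < k + 1) :
    IsBianchini h (krasnoselskijMap (1 / (k + 1)) T) := by
  intro a b
  have hl : 0 ≤ 1 / (k + 1) := by positivity
  rw [krasnoselskijMap_sub_krasnoselskijMap hk.ne', sub_krasnoselskijMap, sub_krasnoselskijMap,
    norm_smul, norm_smul, norm_smul, Real.norm_of_nonneg hl, ← mul_max_of_nonneg _ _ hl,
    mul_left_comm]
  exact mul_le_mul_of_nonneg_left (hT a b) hl

end Krasnoselskij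

theorem enrichedBianchini_krasnoselskij_estimates_general
    {X : Type*} [NormedAddCommGroup X] [NormedSpace ℝ X]
    (T : X → X) (k h : ℝ) (hk : 0 ≤ k) (hh0 : 0 < h) (hh : h < 1)
    (hT : ∀ x y : X, ‖k • (x - y) + (T x - T y)‖ ≤ h * max ‖x - T x‖ ‖y - T y‖)
    (p : X) (hp : T p = p)
    (x : ℕ → X)
    (hx : ∀ n : ℕ, x (n + 1) = (1 - 1 / (k + 1)) • x n + (1 / (k + 1)) • T (x n)) :
    ∀ n : ℕ, 1 ≤ n →
      ‖x n - p‖ ≤ h ^ n / (1 - h) * ‖x 1 - x 0‖ ∧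
      ‖x n - p‖ ≤ h / (1 - h) * ‖x n - x (n - 1)‖ := by
  intro n hn
  obtain ⟨m, rfl⟩ := Nat.exists_eq_add_of_le' hn
  have hS : IsBianchini h (krasnoselskijMap (1 / (k + 1)) T) :=
    IsEnrichedBianchini.isBianchini_krasnoselskijMap hT (by linarith)
  have hbase := hS.norm_orbit_sub_fixedPt_le (IsFixedPt.krasnoselskijMap hp _) hx m
  have hgeom := hS.norm_orbit_succ_sub_le hh0.le hh hx m
  have hdiv (c : ℝ) (hc : 0 ≤ c) : c ≤ c / (1 - h) := le_div_self hc (by linarith) (by linarith)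
  constructor
  · calc ‖x (m + 1) - p‖ ≤ h * (h ^ m * ‖x 1 - x 0‖) :=
          hbase.trans (mul_le_mul_of_nonneg_left hgeom hh0.le)
      _ = h ^ (m + 1) * ‖x 1 - x 0‖ := by ring
      _ ≤ h ^ (m + 1) / (1 - h) * ‖x 1 - x 0‖ :=
          mul_le_mul_of_nonneg_right (hdiv _ (by positivity)) (norm_nonneg _)
  · rw [Nat.add_sub_cancel]
    exact hbase.trans (mul_le_mul_of_nonneg_right (hdiv h hh0.le) (norm_nonneg _))

/-- Error estimates for the Krasnoselskij iteration associated to a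
`(k, h)`-enriched Bianchini mapping: for all `n ≥ 1`,
`‖xₙ − p‖ ≤ (hⁿ/(1−h))·‖x₁ − x₀‖` and `‖xₙ − p‖ ≤ (h/(1−h))·‖xₙ − xₙ₋₁‖`. -/
theorem enrichedBianchini_krasnoselskij_estimates
    {X : Type*} [NormedAddCommGroup X] [NormedSpace ℝ X] [CompleteSpace X]
    (T : X → X) (k h : ℝ) (hk : 0 ≤ k) (hh0 : 0 < h) (hh : h < 1)
    (hT : ∀ x y : X, ‖k • (x - y) + (T x - T y)‖ ≤ h * max ‖x - T x‖ ‖y - T y‖)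
    (p : X) (hp : T p = p) (hpu : ∀ q : X, T q = q → q = p)
    (x : ℕ → X)
    (hx : ∀ n : ℕ, x (n + 1) = (1 - 1 / (k + 1)) • x n + (1 / (k + 1)) • T (x n)) :
    ∀ n : ℕ, 1 ≤ n →
      ‖x n - p‖ ≤ h ^ n / (1 - h) * ‖x 1 - x 0‖ ∧
      ‖x n - p‖ ≤ h / (1 - h) * ‖x n - x (n - 1)‖ :=
  enrichedBianchini_krasnoselskij_estimates_general T k h hk hh0 hh hT p hp x hx
end

section
/- Let T : [0, 1] → [0, 1] be defined by Tx = x/3. Then T is a Bianchini mapping with constant h = 1/2 (i.e., |Tx − Ty| ≤ (1/2)·max{|x − Tx|, |y − Ty|} for all x, y ∈ [0, 1]), but T is not a Kannan mapping: there is no constant a ∈ [0, 1/2) such that |Tx − Ty| ≤ a·(|x − Tx| + |y − Ty|) for all x, y ∈ [0, 1]. -/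
/-- `T x = x/3` on `[0, 1]` is a Bianchini mapping with constant `1/2` but is
not a Kannan mapping. -/
theorem thirdMap_bianchini_not_kannan :
    (∀ x ∈ Set.Icc (0 : ℝ) 1, ∀ y ∈ Set.Icc (0 : ℝ) 1,
        |x / 3 - y / 3| ≤ (1 / 2) * max |x - x / 3| |y - y / 3|) ∧
      ¬ ∃ a : ℝ, 0 ≤ a ∧ a < 1 / 2 ∧
        ∀ x ∈ Set.Icc (0 : ℝ) 1, ∀ y ∈ Set.Icc (0 : ℝ) 1,
          |x / 3 - y / 3| ≤ a * (|x - x / 3| + |y - y / 3|) := by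
  constructor
  · intro x hx y hy
    rcases hx with ⟨hx0, _⟩
    rcases hy with ⟨hy0, _⟩
    have h1 : |x - x / 3| = 2 / 3 * x := by
      rw [abs_of_nonneg] <;> linarith
    have h2 : |y - y / 3| = 2 / 3 * y := by
      rw [abs_of_nonneg] <;> linarith
    rw [h1, h2]
    rcases le_total x y with h | h
    · rw [abs_of_nonpos (by linarith)]
      have : 2 / 3 * x ≤ 2 / 3 * y := by linarith
      calc -(x / 3 - y / 3) ≤ y / 3 := by linarith
        _ ≤ 1 / 2 * max (2 / 3 * x) (2 / 3 * y) := by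
          rw [max_eq_right this]; linarith
    · rw [abs_of_nonneg (by linarith)]
      have : 2 / 3 * y ≤ 2 / 3 * x := by linarith
      calc x / 3 - y / 3 ≤ x / 3 := by linarith
        _ ≤ 1 / 2 * max (2 / 3 * x) (2 / 3 * y) := by
          rw [max_eq_left this]; linarith
  · rintro ⟨a, ha0, ha, h⟩
    have := h 1 ⟨by norm_num, le_refl 1⟩ 0 ⟨le_refl 0, by norm_num⟩
    rw [show |(1:ℝ) / 3 - 0 / 3| = 1/3 by norm_num,
    show |(1:ℝ) - 1/3| = 2/3 by norm_num,
    show |(0:ℝ) - 0/3| = 0 by norm_num] at this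
    linarith
end
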